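/- Let X and N be partial groups and φ: X → Aut(N) a homomorphism of partial groups. Then the external semidirect product L = X ⋉_φ N is the internal semidirect product of the partial subgroup (X,1) with the partial subgroup (1,N). Moreover, (1,n)^{(x,1)} = (1, n^{x^φ}) and Π((x,1),(1,n)) = (x,n) for all x ∈ X, n ∈ N. -/
import Mathlib


universe u v

/-- A partial group: a set `L` with a domain `D ⊆ W(L)` of words, a (total extension of the)
partial product `Pi`, and an involutory inversion, satisfying axioms (PG1)-(PG4).
The value of `Pi` outside `D` is irrelevant. -/
structure PartialGroup (L : Type u) : Type u where
  D : Set (List L)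
  Pi : List L → L
  inv : L → L
  inv_inv : ∀ g, inv (inv g) = g
  singleton_mem : ∀ g, [g] ∈ D
  append_left_mem : ∀ {u v : List L}, u ++ v ∈ D → u ∈ D
  append_right_mem : ∀ {u v : List L}, u ++ v ∈ D → v ∈ D
  Pi_singleton : ∀ g, Pi [g] = g
  pg3_mem : ∀ u v w : List L, u ++ v ++ w ∈ D → u ++ [Pi v] ++ w ∈ D
  pg3_eq : ∀ u v w : List L, u ++ v ++ w ∈ D → Pi (u ++ v ++ w) = Pi (u ++ [Pi v] ++ w)
  pg4_mem : ∀ w ∈ D, (List.map inv w).reverse ++ w ∈ D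
  pg4_eq : ∀ w ∈ D, Pi ((List.map inv w).reverse ++ w) = Pi []

namespace PartialGroup

variable {L : Type u} {L' : Type v}

/-- Inversion of a word: `(g_1,...,g_k)⁻¹ = (g_k⁻¹,...,g_1⁻¹)`. -/
def wInv (P : PartialGroup L) (w : List L) : List L := (w.map P.inv).reverse

/-- The identity `1 = Π(∅)`. -/
def one (P : PartialGroup L) : L := P.Pi []

/-- Conjugation `x^g = Π(g⁻¹, x, g)`. -/
def cnj (P : PartialGroup L) (g x : L) : L := P.Pi [P.inv g, x, g]

/-- `x ∈ D(g)`, i.e. `(g⁻¹, x, g) ∈ D(L)`. -/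
def memD (P : PartialGroup L) (g x : L) : Prop := [P.inv g, x, g] ∈ P.D

/-- `H` is a partial subgroup of `L`. -/
def IsPartialSubgroup (P : PartialGroup L) (H : Set L) : Prop :=
  H.Nonempty ∧ (∀ g ∈ H, P.inv g ∈ H) ∧ ∀ w ∈ P.D, (∀ x ∈ w, x ∈ H) → P.Pi w ∈ H

/-- `N` is a partial normal subgroup of `L`. -/
def IsPartialNormal (P : PartialGroup L) (N : Set L) : Prop :=
  P.IsPartialSubgroup N ∧ ∀ g : L, ∀ n ∈ N, P.memD g n → P.cnj g n ∈ N

/-- `H` is a subgroup of `L`: a partial subgroup with `W(H) ⊆ D(L)`. -/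
def IsSubgroup (P : PartialGroup L) (H : Set L) : Prop :=
  P.IsPartialSubgroup H ∧ ∀ w : List L, (∀ x ∈ w, x ∈ H) → w ∈ P.D

/-- Homomorphism of partial groups. -/
def IsHom (P : PartialGroup L) (P' : PartialGroup L') (φ : L → L') : Prop :=
  ∀ w ∈ P.D, w.map φ ∈ P'.D ∧ φ (P.Pi w) = P'.Pi (w.map φ)

/-- Isomorphism of partial groups: a bijective homomorphism with `D(L)^φ = D(L')`. -/
def IsIso (P : PartialGroup L) (P' : PartialGroup L') (φ : L → L') : Prop :=
  Function.Bijective φ ∧ P.IsHom P' φ ∧ List.map φ '' P.D = P'.D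

end PartialGroup

open PartialGroup

/-- A partial group `X` acts on a partial group `N` via `a : X → N → N`: each `a x` is an
automorphism of `N`, and `x ↦ a x` is a homomorphism of partial groups from `X` to `Aut(N)`
(the latter carrying the full domain; products in `Aut(N)` are composed left-to-right,
matching the exponential notation `n^{c₁c₂} = (n^{c₁})^{c₂}`). -/
def IsAction {X : Type u} {N : Type v} (PX : PartialGroup X) (PN : PartialGroup N)
    (a : X → N → N) : Prop :=
  (∀ x, PN.IsIso PN (a x)) ∧
    ∀ w ∈ PX.D, ∀ n, a (PX.Pi w) n = w.foldl (fun m x => a x m) n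

/-- For `w = ((x₁,f₁),...,(xₙ,fₙ))`, the word
`w_N = (f₁^{(x₂⋯xₙ)^φ}, f₂^{(x₃⋯xₙ)^φ}, ..., fₙ)`. -/
def sdN {X : Type u} {N : Type v} (PX : PartialGroup X) (a : X → N → N) :
    List (X × N) → List N
  | [] => []
  | q :: rest => a (PX.Pi (rest.map Prod.fst)) q.2 :: sdN PX a rest

/-- `PL` is the external semidirect product `X ⋉_a N`: underlying set `X × N`,
domain `{w : w_X ∈ D(X) ∧ w_N ∈ D(N)}`, product `Π(w) = (Π_X(w_X), Π_N(w_N))`,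
inversion `(x,f)⁻¹ = (x⁻¹, (f⁻¹)^{(x⁻¹)^φ})`. -/
def IsExtSemidirect {X : Type u} {N : Type v} (PX : PartialGroup X) (PN : PartialGroup N)
    (a : X → N → N) (PL : PartialGroup (X × N)) : Prop :=
  PL.D = {w | w.map Prod.fst ∈ PX.D ∧ sdN PX a w ∈ PN.D} ∧
  (∀ w ∈ PL.D, PL.Pi w = (PX.Pi (w.map Prod.fst), PN.Pi (sdN PX a w))) ∧
  ∀ p : X × N, PL.inv p = (PX.inv p.1, a (PX.inv p.1) (PN.inv p.2))

open PartialGroup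

/-- For a list of pairs `((x₁,n₁),...,(xₖ,nₖ))` (with `xᵢ ∈ X`, `nᵢ ∈ N`), the word
`w_N = (n₁^{Π(x₂,...,xₖ)}, n₂^{Π(x₃,...,xₖ)}, ..., nₖ)`. -/
def sdn {L : Type u} (P : PartialGroup L) : List (L × L) → List L
  | [] => []
  | q :: rest => P.cnj (P.Pi (rest.map Prod.fst)) q.2 :: sdn P rest

/-- `L` is the internal semidirect product of the partial subgroup `X` with the partial
subgroup `N`: axioms (SD1), (SD2), (SD3). -/
structure IsIntSemidirect {L : Type u} (P : PartialGroup L) (X N : Set L) : Prop where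
  subX : P.IsPartialSubgroup X
  subN : P.IsPartialSubgroup N
  sd1 : ∀ x ∈ X, (∀ n ∈ N, P.memD x n) ∧ P.cnj x '' N = N
  sd2 : ∀ g : L, ∃! q : L × L, q.1 ∈ X ∧ q.2 ∈ N ∧ [q.1, q.2] ∈ P.D ∧ g = P.Pi [q.1, q.2]
  sd3 : ∀ q : List (L × L), (∀ r ∈ q, r.1 ∈ X ∧ r.2 ∈ N) →
      ((q.map fun r => P.Pi [r.1, r.2]) ∈ P.D ↔
        q.map Prod.fst ∈ P.D ∧ sdn P q ∈ P.D) ∧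
      ((q.map fun r => P.Pi [r.1, r.2]) ∈ P.D →
        P.Pi (q.map fun r => P.Pi [r.1, r.2]) =
          P.Pi [P.Pi (q.map Prod.fst), P.Pi (sdn P q)])


section AuxLemmas

namespace PartialGroup

variable {L : Type*} (P : PartialGroup L)

lemma nil_mem : ([] : List L) ∈ P.D :=
  P.append_left_mem (u := []) (v := [P.Pi []]) (by simpa using P.singleton_mem (P.Pi []))

lemma one_cons_mem {w : List L} (h : w ∈ P.D) : P.one :: w ∈ P.D := by
  have := P.pg3_mem [] [] w (by simpa using h)
  simpa [PartialGroup.one] using this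

lemma Pi_one_cons {w : List L} (h : w ∈ P.D) : P.Pi (P.one :: w) = P.Pi w := by
  have := P.pg3_eq [] [] w (by simpa using h)
  simp only [List.nil_append, List.singleton_append] at this
  simpa [PartialGroup.one] using this.symm

lemma append_one_mem {w : List L} (h : w ∈ P.D) : w ++ [P.one] ∈ P.D := by
  have := P.pg3_mem w [] [] (by simpa using h)
  simpa [PartialGroup.one] using this

lemma Pi_append_one {w : List L} (h : w ∈ P.D) : P.Pi (w ++ [P.one]) = P.Pi w := by
  have := P.pg3_eq w [] [] (by simpa using h)
  simp only [List.append_nil] at this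
  simpa [PartialGroup.one] using this.symm

lemma mid_one_mem {u v : List L} (h : u ++ v ∈ P.D) : u ++ P.one :: v ∈ P.D := by
  have := P.pg3_mem u [] v (by simpa using h)
  simpa [PartialGroup.one] using this

lemma Pi_mid_one {u v : List L} (h : u ++ v ∈ P.D) :
    P.Pi (u ++ P.one :: v) = P.Pi (u ++ v) := by
  have := P.pg3_eq u [] v (by simpa using h)
  simp only [List.append_nil, List.singleton_append, List.append_assoc] at this
  simpa [PartialGroup.one] using this.symm

lemma mem_of_all_one {w : List L} (h : ∀ x ∈ w, x = P.one) : w ∈ P.D := by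
  induction w with
  | nil => exact P.nil_mem
  | cons b t ih =>
    have hb := h b (by simp)
    have ht : t ∈ P.D := ih fun x hx => h x (List.mem_cons_of_mem _ hx)
    rw [hb]
    exact P.one_cons_mem ht

lemma Pi_all_one {w : List L} (h : ∀ x ∈ w, x = P.one) : P.Pi w = P.one := by
  induction w with
  | nil => rfl
  | cons b t ih =>
    have hb := h b (by simp)
    have h' : ∀ x ∈ t, x = P.one := fun x hx => h x (List.mem_cons_of_mem _ hx)
    rw [hb, P.Pi_one_cons (P.mem_of_all_one h')]
    exact ih h'

lemma inv_pair_mem (g : L) : [P.inv g, g] ∈ P.D := by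
  simpa using P.pg4_mem [g] (P.singleton_mem g)

lemma Pi_inv_pair (g : L) : P.Pi [P.inv g, g] = P.one := by
  simpa [PartialGroup.one] using P.pg4_eq [g] (P.singleton_mem g)

lemma inv_one : P.inv P.one = P.one := by
  have h3 : P.Pi [P.inv P.one] = P.Pi [P.inv P.one, P.one] := by
    have := P.pg3_eq [P.inv P.one] [] [] (by simpa using P.singleton_mem (P.inv P.one))
    simpa [PartialGroup.one] using this
  rw [← P.Pi_singleton (P.inv P.one), h3, P.Pi_inv_pair]

end PartialGroup

section SDHelpers

variable {X : Type u} {N : Type v} {PX : PartialGroup X} {PN : PartialGroup N}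
    {a : X → N → N} {PL : PartialGroup (X × N)}

lemma a_one (ha : IsAction PX PN a) (x : X) : a x PN.one = PN.one := by
  have := ((ha.1 x).2.1 [] PN.nil_mem).2
  simpa [PartialGroup.one] using this

lemma a_act_one (ha : IsAction PX PN a) (n : N) : a PX.one n = n := by
  have := ha.2 [] PX.nil_mem n
  simpa [PartialGroup.one] using this

lemma sdN_all_one (ha : IsAction PX PN a) {w : List (X × N)}
    (h : ∀ p ∈ w, p.2 = PN.one) : ∀ y ∈ sdN PX a w, y = PN.one := by
  induction w with
  | nil => intro y hy; simp [sdN] at hy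
  | cons b t ih =>
    intro y hy
    rw [sdN] at hy
    rcases List.mem_cons.mp hy with h1 | h2
    · rw [h1, h b (by simp), a_one ha]
    · exact ih (fun p hp => h p (List.mem_cons_of_mem _ hp)) y h2

lemma sdN_map_one (ha : IsAction PX PN a) (v : List N) :
    sdN PX a (v.map fun m => (PX.one, m)) = v := by
  induction v with
  | nil => rfl
  | cons m t ih =>
    simp only [List.map_cons, sdN, ih]
    congr 1
    have h1 : PX.Pi ((t.map fun m => (PX.one, m)).map Prod.fst) = PX.one := by
      apply PX.Pi_all_one
      intro x hx
      simp only [List.map_map, List.mem_map, Function.comp] at hx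
      obtain ⟨_, _, rfl⟩ := hx
      rfl
    rw [h1, a_act_one ha]

/-- C1 : membership and value of `Π((x,1),(1,n))`. -/
lemma pair_word (ha : IsAction PX PN a) (hL : IsExtSemidirect PX PN a PL) (x : X) (n : N) :
    [(x, PN.one), (PX.one, n)] ∈ PL.D ∧
      PL.Pi [(x, PN.one), (PX.one, n)] = (x, n) := by
  have hsd : sdN PX a [(x, PN.one), (PX.one, n)] = [PN.one, n] := by
    simp [sdN, PX.Pi_singleton, a_one ha]
    exact a_act_one ha n
  have hfst : ([(x, PN.one), (PX.one, n)].map Prod.fst) = [x] ++ [PX.one] := by simp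
  have hmem : [(x, PN.one), (PX.one, n)] ∈ PL.D := by
    rw [hL.1]
    refine ⟨?_, ?_⟩
    · rw [hfst]
      exact PX.append_one_mem (PX.singleton_mem x)
    · rw [hsd]
      exact PN.one_cons_mem (PN.singleton_mem n)
  refine ⟨hmem, ?_⟩
  rw [hL.2.1 _ hmem, hsd, hfst, PX.Pi_append_one (PX.singleton_mem x), PX.Pi_singleton,
    PN.Pi_one_cons (PN.singleton_mem n), PN.Pi_singleton]

/-- C2 : membership of the conjugation word and value of `(1,n)^{(x,1)}`. -/
lemma cnj_word (ha : IsAction PX PN a) (hL : IsExtSemidirect PX PN a PL) (x : X) (n : N) :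
    [PL.inv (x, PN.one), (PX.one, n), (x, PN.one)] ∈ PL.D ∧
      PL.cnj (x, PN.one) (PX.one, n) = (PX.one, a x n) := by
  have hinv : PL.inv (x, PN.one) = (PX.inv x, PN.one) := by
    rw [hL.2.2]
    simp [PN.inv_one, a_one ha]
  have hsd : sdN PX a [(PX.inv x, PN.one), (PX.one, n), (x, PN.one)]
      = [PN.one, a x n, PN.one] := by
    simp [sdN, PX.Pi_singleton, a_one ha]
  have hfst : ([(PX.inv x, PN.one), (PX.one, n), (x, PN.one)].map Prod.fst)
      = [PX.inv x] ++ PX.one :: [x] := by simp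
  have hmem : [(PX.inv x, PN.one), (PX.one, n), (x, PN.one)] ∈ PL.D := by
    rw [hL.1]
    refine ⟨?_, ?_⟩
    · rw [hfst]
      exact PX.mid_one_mem (by simpa using PX.inv_pair_mem x)
    · rw [hsd]
      have : (PN.one :: [a x n]) ++ [PN.one] ∈ PN.D :=
        PN.append_one_mem (PN.one_cons_mem (PN.singleton_mem (a x n)))
      simpa using this
  constructor
  · rw [hinv]; exact hmem
  · show PL.Pi [PL.inv (x, PN.one), (PX.one, n), (x, PN.one)] = _
    rw [hinv, hL.2.1 _ hmem, hsd, hfst]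
    have h1 : PX.Pi ([PX.inv x] ++ PX.one :: [x]) = PX.one := by
      rw [PX.Pi_mid_one (by simpa using PX.inv_pair_mem x)]
      simpa using PX.Pi_inv_pair x
    have h2 : PN.Pi [PN.one, a x n, PN.one] = a x n := by
      have hh : PN.Pi ([PN.one, a x n] ++ [PN.one]) = PN.Pi [PN.one, a x n] :=
        PN.Pi_append_one (PN.one_cons_mem (PN.singleton_mem (a x n)))
      rw [show ([PN.one, a x n, PN.one] : List N) = [PN.one, a x n] ++ [PN.one] from rfl,
        hh, PN.Pi_one_cons (PN.singleton_mem (a x n)), PN.Pi_singleton]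
    rw [h1, h2]

/-- K1 : value of the product of a word with all second coordinates 1. -/
lemma xword_pi (ha : IsAction PX PN a) (hL : IsExtSemidirect PX PN a PL)
    {w : List (X × N)} (h : ∀ p ∈ w, p.2 = PN.one) (hx : w.map Prod.fst ∈ PX.D) :
    w ∈ PL.D ∧ PL.Pi w = (PX.Pi (w.map Prod.fst), PN.one) := by
  have hmem : w ∈ PL.D := by
    rw [hL.1]
    exact ⟨hx, PN.mem_of_all_one (sdN_all_one ha h)⟩
  refine ⟨hmem, ?_⟩
  rw [hL.2.1 _ hmem, PN.Pi_all_one (sdN_all_one ha h)]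

/-- K3 : embedding of an `N`-word. -/
lemma nword_mem (ha : IsAction PX PN a) (hL : IsExtSemidirect PX PN a PL) (v : List N) :
    ((v.map fun m => (PX.one, m)) ∈ PL.D ↔ v ∈ PN.D) ∧
      (v ∈ PN.D → PL.Pi (v.map fun m => (PX.one, m)) = (PX.one, PN.Pi v)) := by
  have hfst : ∀ y ∈ (v.map fun m => (PX.one, m)).map Prod.fst, y = PX.one := by
    intro y hy
    simp only [List.map_map, List.mem_map, Function.comp] at hy
    obtain ⟨_, _, rfl⟩ := hy
    rfl
  constructor
  · rw [hL.1, Set.mem_setOf_eq, sdN_map_one ha]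
    exact ⟨fun h => h.2, fun h => ⟨PX.mem_of_all_one hfst, h⟩⟩
  · intro hv
    have hmem : (v.map fun m => (PX.one, m)) ∈ PL.D := by
      rw [hL.1, Set.mem_setOf_eq, sdN_map_one ha]
      exact ⟨PX.mem_of_all_one hfst, hv⟩
    rw [hL.2.1 _ hmem, sdN_map_one ha, PX.Pi_all_one hfst]

/-- K2 : computation of `sdn` for the external semidirect product. -/
lemma sdn_eq (ha : IsAction PX PN a) (hL : IsExtSemidirect PX PN a PL)
    (q : List ((X × N) × (X × N)))
    (hq : ∀ r ∈ q, r.1.2 = PN.one ∧ r.2.1 = PX.one)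
    (hxs : (q.map fun r => r.1.1) ∈ PX.D) :
    sdn PL q = (sdN PX a (q.map fun r => (r.1.1, r.2.2))).map fun m => (PX.one, m) := by
  induction q with
  | nil => rfl
  | cons r t ih =>
    have htq : ∀ r' ∈ t, r'.1.2 = PN.one ∧ r'.2.1 = PX.one :=
      fun r' hr' => hq r' (List.mem_cons_of_mem _ hr')
    have htxs : (t.map fun r => r.1.1) ∈ PX.D := by
      have : [r.1.1] ++ (t.map fun r => r.1.1) ∈ PX.D := by simpa using hxs
      exact PX.append_right_mem this
    have hsnd : ∀ p ∈ t.map Prod.fst, p.2 = PN.one := by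
      intro p hp
      simp only [List.mem_map] at hp
      obtain ⟨r', hr', rfl⟩ := hp
      exact (htq r' hr').1
    have hxeq : (t.map Prod.fst).map Prod.fst = t.map fun r => r.1.1 := by
      simp [List.map_map, Function.comp]
    have hpi : PL.Pi (t.map Prod.fst) = (PX.Pi (t.map fun r => r.1.1), PN.one) := by
      rw [(xword_pi ha hL hsnd (by rw [hxeq]; exact htxs)).2, hxeq]
    have hr2 : r.2 = (PX.one, r.2.2) := by
      have := (hq r (by simp)).2
      exact Prod.ext this rfl
    show PL.cnj (PL.Pi (t.map Prod.fst)) r.2 :: sdn PL t = _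
    rw [hpi, hr2, (cnj_word ha hL _ _).2, ih htq htxs]
    simp [sdN, List.map_map, Function.comp_def]

end SDHelpers

end AuxLemmas

theorem stmt11 {X : Type u} {N : Type v} (PX : PartialGroup X) (PN : PartialGroup N)
    (a : X → N → N) (ha : IsAction PX PN a)
    (PL : PartialGroup (X × N)) (hL : IsExtSemidirect PX PN a PL) :
    IsIntSemidirect PL (Set.univ ×ˢ ({PN.one} : Set N)) (({PX.one} : Set X) ×ˢ Set.univ) ∧
    (∀ x : X, ∀ n : N, PL.cnj (x, PN.one) (PX.one, n) = (PX.one, a x n)) ∧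
    (∀ x : X, ∀ n : N, PL.Pi [(x, PN.one), (PX.one, n)] = (x, n)) := by
  refine ⟨?_, fun x n => (cnj_word ha hL x n).2, fun x n => (pair_word ha hL x n).2⟩
  constructor
  -- subX
  · refine ⟨⟨(PX.one, PN.one), by simp⟩, ?_, ?_⟩
    · intro g hg
      have hg2 : g.2 = PN.one := hg.2
      rw [hL.2.2]
      simp [hg2, PN.inv_one, a_one ha]
    · intro w hw hall
      have hsnd : ∀ p ∈ w, p.2 = PN.one := fun p hp => (hall p hp).2
      rw [hL.2.1 _ hw]
      simp [PN.Pi_all_one (sdN_all_one ha hsnd)]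
  -- subN
  · refine ⟨⟨(PX.one, PN.one), by simp⟩, ?_, ?_⟩
    · intro g hg
      have hg1 : g.1 = PX.one := hg.1
      rw [hL.2.2, hg1]
      simp [PX.inv_one]
    · intro w hw hall
      have hfst : ∀ y ∈ w.map Prod.fst, y = PX.one := by
        intro y hy
        simp only [List.mem_map] at hy
        obtain ⟨p, hp, rfl⟩ := hy
        exact (hall p hp).1
      rw [hL.2.1 _ hw]
      simp [PX.Pi_all_one hfst]
  -- sd1
  · intro p hp
    have hp2 : p.2 = PN.one := hp.2
    obtain ⟨x, n0⟩ := p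
    simp only at hp2
    subst hp2
    refine ⟨?_, ?_⟩
    · intro q hq
      have hq1 : q.1 = PX.one := hq.1
      obtain ⟨y, n⟩ := q
      simp only at hq1
      subst hq1
      exact (cnj_word ha hL x n).1
    · ext p'
      constructor
      · rintro ⟨q, hq, rfl⟩
        have hq1 : q.1 = PX.one := hq.1
        obtain ⟨y, n⟩ := q
        simp only at hq1
        subst hq1
        rw [(cnj_word ha hL x n).2]
        simp
      · intro hp'
        obtain ⟨y, m⟩ := p'
        have hy : y = PX.one := hp'.1
        subst hy
        obtain ⟨n, hn⟩ := (ha.1 x).1.2 m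
        exact ⟨(PX.one, n), by simp, by rw [(cnj_word ha hL x n).2, hn]⟩
  -- sd2
  · rintro ⟨x, n⟩
    refine ⟨((x, PN.one), (PX.one, n)),
      ⟨by simp, by simp, (pair_word ha hL x n).1, (pair_word ha hL x n).2.symm⟩, ?_⟩
    rintro ⟨p₁, p₂⟩ ⟨h1, h2, h3, h4⟩
    have e1 : p₁.2 = PN.one := h1.2
    have e2 : p₂.1 = PX.one := h2.1
    have hp1 : p₁ = (p₁.1, PN.one) := Prod.ext rfl e1
    have hp2 : p₂ = (PX.one, p₂.2) := Prod.ext e2 rfl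
    rw [hp1, hp2, (pair_word ha hL p₁.1 p₂.2).2] at h4
    injection h4 with hx hn
    rw [hp1, hp2, ← hx, ← hn]
  -- sd3
  · intro q hq
    have hq' : ∀ r ∈ q, r.1.2 = PN.one ∧ r.2.1 = PX.one := by
      intro r hr
      obtain ⟨h1, h2⟩ := hq r hr
      exact ⟨h1.2, h2.1⟩
    have hmapeq : (q.map fun r => PL.Pi [r.1, r.2]) = q.map fun r => (r.1.1, r.2.2) := by
      apply List.map_congr_left
      intro r hr
      rw [show r.1 = (r.1.1, PN.one) from Prod.ext rfl (hq' r hr).1,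
        show r.2 = (PX.one, r.2.2) from Prod.ext (hq' r hr).2 rfl]
      exact (pair_word ha hL _ _).2
    have hw'fst : (q.map fun r => (r.1.1, r.2.2)).map Prod.fst = q.map fun r => r.1.1 := by
      simp [List.map_map, Function.comp_def]
    have husnd : ∀ p ∈ q.map Prod.fst, p.2 = PN.one := by
      intro p hp
      simp only [List.mem_map] at hp
      obtain ⟨r, hr, rfl⟩ := hp
      exact (hq' r hr).1
    have hufst : (q.map Prod.fst).map Prod.fst = q.map fun r => r.1.1 := by
      simp [List.map_map, Function.comp_def]
    constructor
    · rw [hmapeq]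
      constructor
      · intro hmem0
        have hmem := hmem0
        rw [hL.1, Set.mem_setOf_eq] at hmem
        have hxs : (q.map fun r => r.1.1) ∈ PX.D := by rw [← hw'fst]; exact hmem.1
        refine ⟨(xword_pi ha hL husnd (by rw [hufst]; exact hxs)).1, ?_⟩
        rw [sdn_eq ha hL q hq' hxs]
        exact ((nword_mem ha hL _).1).mpr hmem.2
      · rintro ⟨hu, hsdn⟩
        have hxs : (q.map fun r => r.1.1) ∈ PX.D := by
          rw [hL.1, Set.mem_setOf_eq] at hu
          rw [← hufst]
          exact hu.1
        rw [hL.1, Set.mem_setOf_eq]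
        refine ⟨by rw [hw'fst]; exact hxs, ?_⟩
        rw [sdn_eq ha hL q hq' hxs] at hsdn
        exact ((nword_mem ha hL _).1).mp hsdn
    · intro hmem0
      rw [hmapeq] at hmem0 ⊢
      have hmem := hmem0
      rw [hL.1, Set.mem_setOf_eq] at hmem
      have hxs : (q.map fun r => r.1.1) ∈ PX.D := by rw [← hw'fst]; exact hmem.1
      rw [hL.2.1 _ hmem0, hw'fst,
        (xword_pi ha hL husnd (by rw [hufst]; exact hxs)).2, hufst,
        sdn_eq ha hL q hq' hxs, (nword_mem ha hL _).2 hmem.2]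
      exact ((pair_word ha hL _ _).2).symm
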